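/- Let u_n satisfy u_n = u_{n-1} + ... + u_{n-k} with initial values u_n = 2^n for 0 ≤ n ≤ k-1, and let ζ₀,…,ζ_{k-1} be the distinct roots of x^k - x^{k-1} - ... - 1. Then for all n ≥ 0, u_n = ∑_{j=0}^{k-1} (ζ_j(ζ_j - 1)/((k+1)ζ_j - 2k)) · ζ_j^n. -/

import Mathlib

/-!
Let `p = X ^ k - ∑_{i<k} X ^ i` and let `w_j = 1 / p'(ζ_j)` be the Lagrange nodal weights of its
roots. Differentiating `(X - 1) p = X ^ (k + 1) - 2 X ^ k + 1` at `ζ_j` shows that the coefficient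
in the formula is `ζ_j ^ k w_j`, so the right-hand side is `s (n + k)` with
`s m = ∑_j w_j ζ_j ^ m`. The sequence `s` solves the recurrence, and Lagrange interpolation gives
`s m = [m = k - 1]` for `m < k`; the consequence `s (m + k + 1) = 2 s (m + k) - s m` of the
recurrence then yields `s (n + k) = 2 ^ n` for `n < k`. Both sides of the formula thus solve the
recurrence with the same initial values.
-/

open Finset Polynomial

namespace Lagrange

variable {F ι : Type*} [Field F] [DecidableEq ι] {s : Finset ι} {v : ι → F}

theorem coeff_basis_card_sub_one (hvs : Set.InjOn v s) {i : ι} (hi : i ∈ s) :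
    (Lagrange.basis s v i).coeff (#s - 1) = nodalWeight s v i := by
  rw [← natDegree_basis hvs hi, ← leadingCoeff, Lagrange.basis, leadingCoeff_prod, nodalWeight]
  refine prod_congr rfl fun j _ => ?_
  rw [basisDivisor, leadingCoeff_mul, leadingCoeff_C, (monic_X_sub_C _).leadingCoeff, mul_one]

theorem coeff_card_sub_one_eq_sum_nodalWeight (hvs : Set.InjOn v s) {f : F[X]}
    (hf : f.degree < #s) :
    f.coeff (#s - 1) = ∑ i ∈ s, nodalWeight s v i * f.eval (v i) := by
  conv_lhs => rw [eq_interpolate hvs hf, interpolate_apply, finsetSum_coeff]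
  refine sum_congr rfl fun i hi => ?_
  rw [coeff_C_mul, coeff_basis_card_sub_one hvs hi, mul_comm]

theorem sum_nodalWeight_mul_pow_of_lt_card (hvs : Set.InjOn v s) {m : ℕ} (hm : m < #s) :
    ∑ i ∈ s, nodalWeight s v i * v i ^ m = if m = #s - 1 then 1 else 0 := by
  have hdeg : ((X : F[X]) ^ m).degree < #s := by
    rw [degree_X_pow]; exact_mod_cast hm
  have h := coeff_card_sub_one_eq_sum_nodalWeight hvs hdeg
  simp only [eval_pow, eval_X, coeff_X_pow] at h
  rw [← h]
  exact if_congr eq_comm rfl rfl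

end Lagrange

namespace LinearRecurrence

variable (R : Type*)

def kBonacci [CommSemiring R] (k : ℕ) : LinearRecurrence R := ⟨k, fun _ => 1⟩

variable {R} [CommRing R] {k : ℕ}

theorem kBonacci_isSolution_iff {u : ℕ → R} :
    (kBonacci R k).IsSolution u ↔ ∀ n, u (n + k) = ∑ i ∈ range k, u (n + i) := by
  simp only [IsSolution, kBonacci, one_mul]
  exact forall_congr' fun n => by rw [← Fin.sum_univ_eq_sum_range]; rfl

theorem kBonacci_isSolution_of_eq_sum {u : ℕ → R}
    (h : ∀ n, k ≤ n → u n = ∑ j ∈ range k, u (n - (j + 1))) : (kBonacci R k).IsSolution u := by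
  refine kBonacci_isSolution_iff.2 fun n => ?_
  rw [h _ le_add_self, ← sum_range_reflect]
  exact sum_congr rfl fun i hi => by grind

theorem kBonacci_charPoly : (kBonacci R k).charPoly = X ^ k - ∑ i ∈ range k, X ^ i := by
  simp only [charPoly, kBonacci, ← C_mul_X_pow_eq_monomial, C_1, one_mul]
  rw [← Fin.sum_univ_eq_sum_range]; rfl

theorem kBonacci_isRoot_charPoly_iff {q : R} :
    (kBonacci R k).charPoly.IsRoot q ↔ q ^ k = ∑ i ∈ range k, q ^ i := by
  simp [kBonacci_charPoly, eval_finsetSum, sub_eq_zero]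

theorem IsSolution.kBonacci_add_succ {u : ℕ → R} (hu : (kBonacci R k).IsSolution u) (n : ℕ) :
    u (n + 1 + k) = 2 * u (n + k) - u n := by
  rw [kBonacci_isSolution_iff] at hu
  have hshift : u (n + 1 + k) = ∑ i ∈ range k, u (n + (i + 1)) := by
    rw [hu]; exact sum_congr rfl fun i _ => by rw [add_assoc, add_comm 1]
  have hfirst := sum_range_succ' (fun i => u (n + i)) k
  have hlast := sum_range_succ (fun i => u (n + i)) k
  rw [add_zero] at hfirst
  linear_combination hshift + hlast - hfirst - hu n

theorem IsSolution.kBonacci_add_eq_two_pow {u : ℕ → R} (hu : (kBonacci R k).IsSolution u)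
    (hinit : ∀ m < k, u m = if m = k - 1 then 1 else 0) {n : ℕ} (hn : n < k) :
    u (n + k) = 2 ^ n := by
  induction n with
  | zero =>
    rw [kBonacci_isSolution_iff.1 hu, sum_congr rfl fun i hi => hinit _ (by simpa using hi)]
    simp [hn]
  | succ n ih =>
    rw [hu.kBonacci_add_succ, ih (by omega), hinit n (by omega), if_neg (by omega), pow_succ]
    ring

theorem isSolution_sum_mul_pow (E : LinearRecurrence R) {ι : Type*} (s : Finset ι) (a q : ι → R)
    (hq : ∀ i ∈ s, E.charPoly.IsRoot (q i)) : E.IsSolution fun n => ∑ i ∈ s, a i * q i ^ n := by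
  have hsum : (fun n => ∑ i ∈ s, a i * q i ^ n) = ∑ i ∈ s, a i • fun n => q i ^ n := by
    ext n; simp
  rw [is_sol_iff_mem_solSpace, hsum]
  exact Submodule.sum_mem _ fun i hi => Submodule.smul_mem _ _
    ((E.is_sol_iff_mem_solSpace _).1 ((E.geom_sol_iff_root_charPoly _).2 (hq i hi)))

theorem kBonacci_sub_one_mul_derivative_charPoly_eval {q : R}
    (hq : (kBonacci R k).charPoly.IsRoot q) :
    (q - 1) * (derivative (kBonacci R k).charPoly).eval q =
      (k + 1) * q ^ k - 2 * k * q ^ (k - 1) := by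
  have hmul : (X - 1) * (kBonacci R k).charPoly = X ^ (k + 1) - 2 * X ^ k + 1 := by
    rw [kBonacci_charPoly]
    linear_combination -(geom_sum_mul (X : R[X]) k)
  have hder := congrArg (fun p => (derivative p).eval q) hmul
  simp only [derivative_mul, derivative_sub, derivative_add, derivative_X, derivative_one,
    derivative_X_pow, derivative_ofNat, eval_add, eval_sub, eval_mul, eval_pow, eval_X, eval_C,
    eval_one, eval_zero, eval_ofNat, hq.eq_zero, Nat.add_sub_cancel] at hder
  push_cast at hder
  linear_combination hder

section Field

variable {F : Type*} [Field F]

theorem nodal_eq_charPoly (E : LinearRecurrence F) {ζ : Fin E.order → F}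
    (hinj : Function.Injective ζ) (hroot : ∀ j, E.charPoly.IsRoot (ζ j)) :
    Lagrange.nodal univ ζ = E.charPoly := by
  refine Polynomial.eq_of_degree_le_of_eval_index_eq univ hinj.injOn ?_ ?_ ?_ ?_
  · simp [Lagrange.degree_nodal]
  · simp [Lagrange.degree_nodal]
  · rw [Lagrange.nodal_monic.leadingCoeff, E.charPoly_monic.leadingCoeff]
  · intro j hj
    rw [Lagrange.eval_nodal_at_node hj, (hroot j).eq_zero]

theorem kBonacci_div_eq_pow_mul_nodalWeight {ζ : Fin k → F} (hinj : Function.Injective ζ)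
    (hroot : ∀ j, (kBonacci F k).charPoly.IsRoot (ζ j)) {j : Fin k} (hj : ζ j ≠ 1) :
    ζ j * (ζ j - 1) / ((k + 1) * ζ j - 2 * k) = ζ j ^ k * Lagrange.nodalWeight univ ζ j := by
  set d := (derivative (kBonacci F k).charPoly).eval (ζ j)
  have hw : Lagrange.nodalWeight univ ζ j = d⁻¹ := by
    rw [Lagrange.nodalWeight_eq_eval_derivative_nodal (mem_univ j)]
    congr 3
    exact nodal_eq_charPoly (kBonacci F k) hinj hroot
  have hd : d ≠ 0 := by
    simpa [hw] using Lagrange.nodalWeight_ne_zero hinj.injOn (mem_univ j)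
  have hpow : ζ j ^ k = ζ j ^ (k - 1) * ζ j := by
    rw [← pow_succ, Nat.sub_add_cancel j.pos]
  have hder := kBonacci_sub_one_mul_derivative_charPoly_eval (hroot j)
  rw [hpow] at hder
  have hD : ((k : F) + 1) * ζ j - 2 * k ≠ 0 := by
    intro h
    apply mul_ne_zero (sub_ne_zero.2 hj) hd
    linear_combination hder + ζ j ^ (k - 1) * h
  rw [hw, hpow, div_eq_iff hD]
  field_simp
  linear_combination ζ j * hder

end Field

end LinearRecurrence

open LinearRecurrence

theorem stmt_17 (k : ℕ) (hk : 2 ≤ k) (ζ : Fin k → ℂ)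
    (hroot : ∀ j, (ζ j) ^ k = ∑ i ∈ range k, (ζ j) ^ i)
    (hinj : Function.Injective ζ)
    (u : ℕ → ℂ)
    (hinit : ∀ n < k, u n = 2 ^ n)
    (hrec : ∀ n, k ≤ n → u n = ∑ j ∈ range k, u (n - (j + 1)))
    (n : ℕ) :
    u n = ∑ j : Fin k, (ζ j * (ζ j - 1) / ((k + 1) * ζ j - 2 * k)) * (ζ j) ^ n := by
  have hζ : ∀ j, (kBonacci ℂ k).charPoly.IsRoot (ζ j) :=
    fun j => kBonacci_isRoot_charPoly_iff.2 (hroot j)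
  have hζ_ne_one : ∀ j, ζ j ≠ 1 := fun j h => by
    have := hroot j
    simp only [h, one_pow, sum_const, card_range, nsmul_eq_mul, mul_one] at this
    norm_cast at this
    omega
  set w := Lagrange.nodalWeight univ ζ
  have hw : (kBonacci ℂ k).IsSolution fun m => ∑ j, w j * ζ j ^ m :=
    isSolution_sum_mul_pow _ _ _ _ fun j _ => hζ j
  have hw_init : ∀ m < k, ∑ j, w j * ζ j ^ m = if m = k - 1 then 1 else 0 := fun m hm => by
    simpa using Lagrange.sum_nodalWeight_mul_pow_of_lt_card (s := univ) hinj.injOn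
      (by simpa using hm)
  have hu_eq :
      u = fun n => ∑ j : Fin k, (ζ j * (ζ j - 1) / ((k + 1) * ζ j - 2 * k)) * ζ j ^ n := by
    refine ((kBonacci ℂ k).eq_iff_eqOn_range_order _ _ (kBonacci_isSolution_of_eq_sum hrec)
      (isSolution_sum_mul_pow _ _ _ _ fun j _ => hζ j)).2 fun m hm => ?_
    have hm : m < k := mem_range.1 hm
    simp only [kBonacci_div_eq_pow_mul_nodalWeight hinj hζ (hζ_ne_one _)]
    rw [hinit m hm, ← hw.kBonacci_add_eq_two_pow hw_init hm]
    simp only [pow_add]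
    exact sum_congr rfl fun j _ => by ring
  exact congrFun hu_eq n
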